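/- arXiv:1904.02425 — 7 statements merged into one kernel-verified Lean document; each statement's English description precedes it below -/
import Mathlib

section
/- Any 0-intersecting hypergraph (every two edges intersect) in which every edge has at least 2 vertices is properly 3-colorable: there exists a coloring of the vertices with 3 colors such that no edge is monochromatic. -/
/-!
Take an edge `M` of minimum size and a vertex `x ∈ M`; colour `x` with `0`, the rest of `M`
with `1` and every other vertex with `2`. `M` sees the colours `0` and `1`. Any other edge `A`
meets `M`, and by minimality of `|M|` it is not contained in `M`, so it sees a vertex coloured
`2` and a vertex of `M`, coloured `0` or `1`.
-/

namespace Finset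

theorem exists_mem_notMem_of_card_le_of_ne {V : Type*} {A M : Finset V}
    (hle : M.card ≤ A.card) (hne : A ≠ M) : ∃ z ∈ A, z ∉ M :=
  not_subset.mp fun hsub => (card_lt_card (hsub.ssubset_of_ne hne)).not_ge hle

variable {V : Type*} [DecidableEq V]

def pivotColoring (M : Finset V) (x : V) (v : V) : Fin 3 :=
  if v = x then 0 else if v ∈ M then 1 else 2

theorem pivotColoring_ne_of_notMem {M : Finset V} {x u z : V} (hx : x ∈ M) (hu : u ∈ M)
    (hz : z ∉ M) : pivotColoring M x u ≠ pivotColoring M x z := by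
  have hzx : z ≠ x := fun h => hz (h ▸ hx)
  by_cases hux : u = x <;> simp [pivotColoring, hux, hzx, hz, hu]

theorem exists_pivotColoring_ne_of_two_le_card {M : Finset V} {x : V} (hx : x ∈ M)
    (hM : 2 ≤ M.card) : ∃ u ∈ M, ∃ w ∈ M, pivotColoring M x u ≠ pivotColoring M x w := by
  obtain ⟨y, hy, hyx⟩ := M.exists_mem_ne hM x
  exact ⟨x, hx, y, hy, by simp [pivotColoring, hyx, hy]⟩

end Finset

open Finset

theorem stmt0_general {V : Type*} [DecidableEq V]
    (H : Finset (Finset V))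
    (hint : ∀ A ∈ H, ∀ B ∈ H, (A ∩ B).Nonempty)
    (hcard : ∀ A ∈ H, 2 ≤ A.card) :
    ∃ χ : V → Fin 3, ∀ A ∈ H, ∃ u ∈ A, ∃ w ∈ A, χ u ≠ χ w := by
  rcases H.eq_empty_or_nonempty with rfl | hne
  · exact ⟨fun _ => 0, by simp⟩
  obtain ⟨M, hM, hmin⟩ := H.exists_min_image card hne
  obtain ⟨x, hx⟩ : M.Nonempty := card_pos.mp (by linarith [hcard M hM])
  refine ⟨pivotColoring M x, fun A hA => ?_⟩
  by_cases hAM : A = M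
  · subst hAM
    exact exists_pivotColoring_ne_of_two_le_card hx (hcard A hM)
  obtain ⟨u, hu⟩ := hint A hA M hM
  obtain ⟨z, hzA, hzM⟩ := exists_mem_notMem_of_card_le_of_ne (hmin A hA) hAM
  exact ⟨u, (mem_inter.mp hu).1, z, hzA,
    pivotColoring_ne_of_notMem hx (mem_inter.mp hu).2 hzM⟩

/-- Any 0-intersecting hypergraph (every two edges intersect) in which every edge
has at least 2 vertices is properly 3-colorable. -/
theorem stmt0 {V : Type*} [Fintype V] [DecidableEq V]
    (H : Finset (Finset V))
    (hint : ∀ A ∈ H, ∀ B ∈ H, (A ∩ B).Nonempty)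
    (hcard : ∀ A ∈ H, 2 ≤ A.card) :
    ∃ χ : V → Fin 3, ∀ A ∈ H, ∃ u ∈ A, ∃ w ∈ A, χ u ≠ χ w :=
  stmt0_general H hint hcard
end

section
/- Any c-intersecting hypergraph in which every edge has at least 2 vertices is properly (3+c)-colorable. -/
/-!
Pick an edge `A₀` of minimum size and a vertex `u ∈ A₀`. Colour `u` with `0` and the rest of
`A₀` with `1`. An edge `A ≠ A₀` meeting `A₀` is not contained in `A₀` by minimality, so it sees
a colour `≤ 1` and a colour `≥ 2`. The at most `c` edges disjoint from `A₀` are coloured with the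
remaining `1 + c` colours: any `m` edges with at least two vertices each are properly
`(m + 1)`-colourable, since adding an edge only requires giving one of its vertices a fresh colour.
-/

open Finset

def IsProperColoring {V κ : Type*} (H : Finset (Finset V)) (χ : V → κ) : Prop :=
  ∀ A ∈ H, ∃ u ∈ A, ∃ w ∈ A, χ u ≠ χ w

section

variable {V κ : Type*} [DecidableEq V]

theorem IsProperColoring.update_of_forall_ne {H : Finset (Finset V)} {χ : V → κ}
    (hχ : IsProperColoring H χ) (x : V) {a : κ} (ha : ∀ v, χ v ≠ a) :
    IsProperColoring H (Function.update χ x a) := by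
  intro A hA
  obtain ⟨u, hu, w, hw, huw⟩ := hχ A hA
  refine ⟨u, hu, w, hw, ?_⟩
  by_cases hux : u = x <;> by_cases hwx : w = x
  · subst hux hwx; exact absurd rfl huw
  · simpa [hux, hwx] using (ha w).symm
  · simpa [hux, hwx] using ha u
  · simpa [hux, hwx] using huw

theorem isProperColoring_update_of_mem {A : Finset V} (hA : 2 ≤ A.card) {x : V} (hx : x ∈ A)
    {χ : V → κ} {a : κ} (ha : ∀ v, χ v ≠ a) :
    ∃ u ∈ A, ∃ w ∈ A, Function.update χ x a u ≠ Function.update χ x a w := by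
  obtain ⟨w, hw, hwx⟩ := A.exists_mem_ne (by omega) x
  exact ⟨x, hx, w, hw, by simpa [hwx] using (ha w).symm⟩

theorem exists_isProperColoring_le_card (D : Finset (Finset V)) (hD : ∀ B ∈ D, 2 ≤ B.card) :
    ∃ ψ : V → ℕ, (∀ v, ψ v ≤ D.card) ∧ IsProperColoring D ψ := by
  induction D using Finset.induction_on with
  | empty => exact ⟨0, by simp, by simp [IsProperColoring]⟩
  | insert B D hB ih =>
    obtain ⟨ψ, hψle, hψ⟩ := ih fun B' hB' => hD B' (mem_insert_of_mem hB')
    have hBcard := hD B (mem_insert_self B D)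
    obtain ⟨x, hx⟩ : B.Nonempty := card_pos.mp (by omega)
    have hfresh : ∀ v, ψ v ≠ D.card + 1 := fun v => by have := hψle v; omega
    refine ⟨Function.update ψ x (D.card + 1), fun v => ?_, fun A hA => ?_⟩
    · rw [card_insert_of_notMem hB, Function.update_apply]
      split_ifs
      · rfl
      · exact (hψle v).trans (Nat.le_succ _)
    · rcases mem_insert.mp hA with rfl | hA
      · exact isProperColoring_update_of_mem hBcard hx hfresh
      · exact hψ.update_of_forall_ne x hfresh A hA

theorem isProperColoring_of_min_card_edge {H : Finset (Finset V)} {A₀ : Finset V} (hA₀ : A₀ ∈ H)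
    (hmin : ∀ A ∈ H, A₀.card ≤ A.card) (h2 : 2 ≤ A₀.card) {u : V} (hu : u ∈ A₀) {ψ : V → ℕ}
    (hψ : IsProperColoring (H.filter fun B => B ≠ A₀ ∧ A₀ ∩ B = ∅) ψ) :
    IsProperColoring H fun v => if v ∈ A₀ then if v = u then 0 else 1 else ψ v + 2 := by
  intro A hA
  by_cases hAA₀ : A = A₀
  · subst hAA₀
    obtain ⟨w, hw, hwu⟩ := A.exists_mem_ne (by omega) u
    exact ⟨u, hu, w, hw, by simp [hu, hw, hwu]⟩
  by_cases hdisj : A₀ ∩ A = ∅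
  · obtain ⟨x, hx, y, hy, hxy⟩ := hψ A (mem_filter.mpr ⟨hA, hAA₀, hdisj⟩)
    have hout : ∀ v ∈ A, v ∉ A₀ := fun v hv hv₀ => by
      simpa [hdisj] using mem_inter.mpr ⟨hv₀, hv⟩
    exact ⟨x, hx, y, hy, by simpa [hout x hx, hout y hy] using hxy⟩
  · obtain ⟨a, ha⟩ := nonempty_iff_ne_empty.mpr hdisj
    obtain ⟨w, hw, hwA₀⟩ := not_subset.mp fun hsub =>
      hAA₀ (eq_of_subset_of_card_le hsub (hmin A hA))
    refine ⟨a, (mem_inter.mp ha).2, w, hw, ?_⟩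
    simp only [(mem_inter.mp ha).1, hwA₀, if_true, if_false]
    split_ifs <;> omega

end

theorem stmt1_general {V : Type*} [DecidableEq V] (c : ℕ)
    (H : Finset (Finset V))
    (hint : ∀ A ∈ H, (H.filter fun B => B ≠ A ∧ A ∩ B = ∅).card ≤ c)
    (hcard : ∀ A ∈ H, 2 ≤ A.card) :
    ∃ χ : V → Fin (3 + c), ∀ A ∈ H, ∃ u ∈ A, ∃ w ∈ A, χ u ≠ χ w := by
  rcases H.eq_empty_or_nonempty with rfl | hH
  · exact ⟨fun _ => ⟨0, by omega⟩, by simp⟩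
  obtain ⟨A₀, hA₀, hmin⟩ := H.exists_min_image card hH
  obtain ⟨u, hu⟩ : A₀.Nonempty := card_pos.mp (by have := hcard A₀ hA₀; omega)
  obtain ⟨ψ, hψle, hψ⟩ := exists_isProperColoring_le_card (H.filter fun B => B ≠ A₀ ∧ A₀ ∩ B = ∅)
    fun B hB => hcard B (mem_filter.mp hB).1
  have hχ := isProperColoring_of_min_card_edge hA₀ hmin (hcard A₀ hA₀) hu hψ
  have hlt : ∀ v, (if v ∈ A₀ then if v = u then 0 else 1 else ψ v + 2) < 3 + c := fun v => by
    have := (hψle v).trans (hint A₀ hA₀)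
    split_ifs <;> omega
  refine ⟨fun v => ⟨_, hlt v⟩, fun A hA => ?_⟩
  obtain ⟨x, hx, y, hy, hxy⟩ := hχ A hA
  exact ⟨x, hx, y, hy, fun h => hxy (congrArg Fin.val h)⟩

/-- Any c-intersecting hypergraph in which every edge has at least 2 vertices is
properly (3+c)-colorable. -/
theorem stmt1 {V : Type*} [Fintype V] [DecidableEq V] (c : ℕ)
    (H : Finset (Finset V))
    (hint : ∀ A ∈ H, (H.filter fun B => B ≠ A ∧ A ∩ B = ∅).card ≤ c)
    (hcard : ∀ A ∈ H, 2 ≤ A.card) :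
    ∃ χ : V → Fin (3 + c), ∀ A ∈ H, ∃ u ∈ A, ∃ w ∈ A, χ u ≠ χ w :=
  stmt1_general c H hint hcard
end

section
/- Let H be a hypergraph with m edges on n vertices, let ε₁, ε₂ ∈ (0,1) with ε₁ < ε₂, and let T = {v ∈ V : deg_H(v) > ε₁·m} be the set of high-degree vertices. If the number of edges contained in T is at most (1−ε₂)·m, then there exists a set S ⊇ T such that (1−ε₂)·m ≤ |H_S| ≤ (1−ε₂+ε₁)·m, where H_S = {H ∈ H : H ⊆ S}. -/
/-! Shrink `V` one vertex of `V \ T` at a time while at least `(1 - ε₂)m` edges remain induced.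
Removing a vertex outside `T` destroys at most `ε₁m` induced edges, so the last set reached
either is `T` itself or lies one step above the threshold, hence induces at most
`(1 - ε₂ + ε₁)m` edges. -/

open Finset

theorem exists_superset_between {V : Type*} [DecidableEq V] (f : Finset V → ℝ) (T S₀ : Finset V)
    (a d : ℝ) (hTS₀ : T ⊆ S₀) (hS₀ : a ≤ f S₀) (hT : f T ≤ a + d)
    (hstep : ∀ S v, v ∈ S → v ∉ T → f S ≤ f (S.erase v) + d) :
    ∃ S, T ⊆ S ∧ a ≤ f S ∧ f S ≤ a + d := by
  induction S₀ using Finset.strongInduction with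
  | H S ih =>
    by_cases hST : S ⊆ T
    · exact ⟨S, hTS₀, hS₀, (Subset.antisymm hST hTS₀) ▸ hT⟩
    obtain ⟨v, hvS, hvT⟩ := not_subset.mp hST
    have hTS' : T ⊆ S.erase v := fun x hx => mem_erase.mpr ⟨ne_of_mem_of_not_mem hx hvT, hTS₀ hx⟩
    by_cases ha : a ≤ f (S.erase v)
    · exact ih _ (erase_ssubset hvS) hTS' ha
    · exact ⟨S, hTS₀, hS₀, by linarith [hstep S v hvS hvT]⟩

theorem card_filter_subset_le_card_filter_subset_erase_add {V : Type*} [DecidableEq V]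
    (H : Finset (Finset V)) (S : Finset V) (v : V) :
    #(H.filter fun A => A ⊆ S) ≤ #(H.filter fun A => A ⊆ S.erase v) + #(H.filter fun A => v ∈ A) := by
  calc #(H.filter fun A => A ⊆ S)
      ≤ #((H.filter fun A => A ⊆ S.erase v) ∪ H.filter fun A => v ∈ A) := by
        refine card_le_card fun A hA => ?_
        obtain ⟨hAH, hAS⟩ := mem_filter.mp hA
        by_cases hvA : v ∈ A
        · exact mem_union_right _ (mem_filter.mpr ⟨hAH, hvA⟩)
        · exact mem_union_left _
            (mem_filter.mpr ⟨hAH, fun x hx => mem_erase.mpr ⟨ne_of_mem_of_not_mem hx hvA, hAS hx⟩⟩)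
    _ ≤ _ := card_union_le _ _

theorem stmt4_general {V : Type*} [Fintype V] [DecidableEq V]
    (H : Finset (Finset V)) (ε₁ ε₂ : ℝ)
    (h10 : 0 < ε₁) (h20 : 0 < ε₂)
    (T : Finset V)
    (hT : T = Finset.univ.filter fun v =>
      ε₁ * (H.card : ℝ) < ((H.filter fun A => v ∈ A).card : ℝ))
    (hHT : ((H.filter fun A => A ⊆ T).card : ℝ) ≤ (1 - ε₂) * H.card) :
    ∃ S : Finset V, T ⊆ S ∧
      (1 - ε₂) * (H.card : ℝ) ≤ ((H.filter fun A => A ⊆ S).card : ℝ) ∧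
      ((H.filter fun A => A ⊆ S).card : ℝ) ≤ (1 - ε₂ + ε₁) * H.card := by
  have hm : (0 : ℝ) ≤ #H := Nat.cast_nonneg _
  have hlowdeg : ∀ v ∉ T, (#(H.filter fun A => v ∈ A) : ℝ) ≤ ε₁ * #H := fun v hv => by
    simpa [hT] using hv
  have huniv : (H.filter fun A => A ⊆ univ) = H := filter_true_of_mem fun A _ => subset_univ A
  rw [add_mul]
  refine exists_superset_between (fun S => (#(H.filter fun A => A ⊆ S) : ℝ)) T univ _ _
    (subset_univ T) ?_ (le_add_of_le_of_nonneg hHT (by positivity)) fun S v _ hvT => ?_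
  · simp only [huniv]
    nlinarith
  · have hcount : (#(H.filter fun A => A ⊆ S) : ℝ) ≤
        #(H.filter fun A => A ⊆ S.erase v) + #(H.filter fun A => v ∈ A) := by
      exact_mod_cast card_filter_subset_le_card_filter_subset_erase_add H S v
    linarith [hlowdeg v hvT]

/-- Balanced-set proposition: if the set T of high-degree vertices induces at most
(1-ε₂)m edges, then there is S ⊇ T with (1-ε₂)m ≤ |H_S| ≤ (1-ε₂+ε₁)m. -/
theorem stmt4 {V : Type*} [Fintype V] [DecidableEq V]
    (H : Finset (Finset V)) (ε₁ ε₂ : ℝ)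
    (h10 : 0 < ε₁) (h11 : ε₁ < 1) (h20 : 0 < ε₂) (h21 : ε₂ < 1) (h12 : ε₁ < ε₂)
    (T : Finset V)
    (hT : T = Finset.univ.filter fun v =>
      ε₁ * (H.card : ℝ) < ((H.filter fun A => v ∈ A).card : ℝ))
    (hHT : ((H.filter fun A => A ⊆ T).card : ℝ) ≤ (1 - ε₂) * H.card) :
    ∃ S : Finset V, T ⊆ S ∧
      (1 - ε₂) * (H.card : ℝ) ≤ ((H.filter fun A => A ⊆ S).card : ℝ) ∧
      ((H.filter fun A => A ⊆ S).card : ℝ) ≤ (1 - ε₂ + ε₁) * H.card :=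
  stmt4_general H ε₁ ε₂ h10 h20 T hT hHT
end

section
/- Let H be a c-intersecting hypergraph partitioned into nonempty parts H_i and H_j (i ≠ j) with |H_i| > 2c and |H_j| > 2c, where every edge of H_i is disjoint from every edge of H_j outside a distinguished set V₀ (i.e., any intersection of an edge of H_i with an edge of H_j lies in V₀). Let ε₁ ∈ (0,1/2] and let T_i (resp. T_j) be the vertices of V₀ with degree > ε₁|H_i| in H_i^{V₀} (resp. > ε₁|H_j| in H_j^{V₀}). If T_i ∩ T_j = ∅, then the edges of H_i^{V₀} contained in T_i number at most c, or the edges of H_j^{V₀} contained in T_j number at most c. -/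
/-!
An edge `A` of `Hi` whose trace lies in `Ti` and an edge `B` of `Hj` whose trace lies in `Tj`
can only meet inside `V₀`, hence inside `Ti ∩ Tj = ∅`. So if more than `c` edges of `Hi` have
their trace in `Ti`, any one of them is disjoint from all edges of `Hj` with trace in `Tj`,
and the `c`-intersecting property bounds their number by `c`.
-/

open Finset

section

variable {α : Type*} [DecidableEq α]

theorem disjoint_of_inter_subset_of_traces_subset {A B V₀ S T : Finset α}
    (hAB : A ∩ B ⊆ V₀) (hA : A ∩ V₀ ⊆ S) (hB : B ∩ V₀ ⊆ T) (hST : Disjoint S T) :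
    Disjoint A B :=
  disjoint_left.2 fun x hxA hxB =>
    have hx : x ∈ V₀ := hAB (mem_inter.2 ⟨hxA, hxB⟩)
    disjoint_left.1 hST (hA (mem_inter.2 ⟨hxA, hx⟩)) (hB (mem_inter.2 ⟨hxB, hx⟩))

theorem card_le_of_forall_disjoint {c : ℕ} {H F : Finset (Finset α)} {A : Finset α}
    (hint : ∀ A ∈ H, (H.filter fun B => B ≠ A ∧ A ∩ B = ∅).card ≤ c) (hA : A ∈ H)
    (hF : F ⊆ H) (hFA : ∀ B ∈ F, B ≠ A ∧ Disjoint A B) : F.card ≤ c :=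
  (card_le_card fun B hB => mem_filter.2
    ⟨hF hB, (hFA B hB).1, disjoint_iff_inter_eq_empty.1 (hFA B hB).2⟩).trans (hint A hA)

end

theorem stmt6_general {V : Type*} [DecidableEq V] (c : ℕ)
    (H Hi Hj : Finset (Finset V)) (V₀ : Finset V)
    (hint : ∀ A ∈ H, (H.filter fun B => B ≠ A ∧ A ∩ B = ∅).card ≤ c)
    (hpart : Hi ∪ Hj = H) (hdisj : Disjoint Hi Hj)
    (hV0 : ∀ A ∈ Hi, ∀ B ∈ Hj, A ∩ B ⊆ V₀)
    (Ti Tj : Finset V)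
    (hTT : Ti ∩ Tj = ∅) :
    (Hi.filter fun A => A ∩ V₀ ⊆ Ti).card ≤ c ∨
    (Hj.filter fun A => A ∩ V₀ ⊆ Tj).card ≤ c := by
  by_contra! h
  obtain ⟨A, hA⟩ := card_pos.1 (c.zero_le.trans_lt h.1)
  obtain ⟨hAi, hAT⟩ := mem_filter.1 hA
  refine h.2.not_ge (card_le_of_forall_disjoint hint (hpart ▸ mem_union_left _ hAi) ?_ ?_)
  · exact fun B hB => hpart ▸ mem_union_right _ (mem_filter.1 hB).1
  · intro B hB
    obtain ⟨hBj, hBT⟩ := mem_filter.1 hB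
    refine ⟨?_, disjoint_of_inter_subset_of_traces_subset (hV0 A hAi B hBj) hAT hBT
      (disjoint_iff_inter_eq_empty.2 hTT)⟩
    rintro rfl
    exact disjoint_left.1 hdisj hAi hBj

/-- If a c-intersecting hypergraph is partitioned into Hi, Hj (each with more than
2c edges) whose cross intersections lie in V₀, and the high-trace-degree vertex
sets Ti, Tj are disjoint, then the trace edges inside Ti number at most c,
or those inside Tj do. -/
theorem stmt6 {V : Type*} [Fintype V] [DecidableEq V] (c : ℕ)
    (H Hi Hj : Finset (Finset V)) (V₀ : Finset V) (ε₁ : ℝ)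
    (hint : ∀ A ∈ H, (H.filter fun B => B ≠ A ∧ A ∩ B = ∅).card ≤ c)
    (hpart : Hi ∪ Hj = H) (hdisj : Disjoint Hi Hj)
    (hiNe : Hi.Nonempty) (hjNe : Hj.Nonempty)
    (hic : 2 * c < Hi.card) (hjc : 2 * c < Hj.card)
    (hV0 : ∀ A ∈ Hi, ∀ B ∈ Hj, A ∩ B ⊆ V₀)
    (hε0 : 0 < ε₁) (hε1 : ε₁ ≤ 1 / 2)
    (Ti Tj : Finset V)
    (hTi : Ti = V₀.filter fun v =>
      ε₁ * (Hi.card : ℝ) < ((Hi.filter fun A => v ∈ A).card : ℝ))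
    (hTj : Tj = V₀.filter fun v =>
      ε₁ * (Hj.card : ℝ) < ((Hj.filter fun A => v ∈ A).card : ℝ))
    (hTT : Ti ∩ Tj = ∅) :
    (Hi.filter fun A => A ∩ V₀ ⊆ Ti).card ≤ c ∨
    (Hj.filter fun A => A ∩ V₀ ⊆ Tj).card ≤ c :=
  stmt6_general c H Hi Hj V₀ hint hpart hdisj hV0 Ti Tj hTT
end

section
/- Let χ be a proper partial L-coloring of a hypergraph H, and let S ⊆ V₀ (the uncolored vertices) be such that no edge of H is contained in V \ S. Fix any coloring χ_p of V₀ \ S from the lists, and let χ̂ = χ ∪ χ_p. Then χ extends to a proper L-coloring of H if and only if either (i) χ extends to a proper L-coloring χ′ with χ′ agreeing with χ_p on V₀ \ S, or (ii) there exists an edge H ∈ H, not an entirely-uncolored edge contained in S, with |χ̂(H \ S)| = 1 and χ extends to a proper L-coloring χ′ with χ′ constant on H ∩ S equal to the unique color in χ̂(H \ S). -/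
/-- χ' is a proper L-coloring of H extending the partial coloring χ. -/
def ProperExt {V : Type*} [DecidableEq V] {k : ℕ} (H : Finset (Finset V))
    (L : V → Finset (Fin k)) (χ : V → Option (Fin k)) (χ' : V → Fin k) : Prop :=
  (∀ v a, χ v = some a → χ' v = a) ∧
  (∀ v, χ v = none → χ' v ∈ L v) ∧
  ∀ A ∈ H, ∃ u ∈ A, ∃ w ∈ A, χ' u ≠ χ' w

/-!
Given any proper extension χ', glue it on S to χ̂ = χ ∪ χ_p off S. The glued coloring is a
list coloring extending χ. If it is proper, we are in case (i). Otherwise some edge A is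
monochromatic under it; since A meets S, its color a is that of χ' on A ∩ S, and χ̂ is
constant a on A \ S, which is nonempty because χ' itself is proper on A. This is case (ii),
witnessed by χ'.
-/

namespace Finset

variable {α β : Type*} [DecidableEq α] {S A : Finset α} {g h : α → β}

theorem exists_eq_of_piecewise_const
    (hconst : ∀ u ∈ A, ∀ w ∈ A, S.piecewise g h u = S.piecewise g h w)
    (hmeet : (A ∩ S).Nonempty) (hg : ∃ u ∈ A, ∃ w ∈ A, g u ≠ g w) :
    (A \ S).Nonempty ∧ ∃ a, (∀ v ∈ A \ S, h v = a) ∧ ∀ v ∈ A ∩ S, g v = a := by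
  obtain ⟨u₀, hu₀⟩ := hmeet
  rw [mem_inter] at hu₀
  have hin : ∀ v ∈ A ∩ S, g v = g u₀ := fun v hv => by
    rw [mem_inter] at hv
    simpa [piecewise_eq_of_mem, hv.2, hu₀.2] using hconst v hv.1 u₀ hu₀.1
  refine ⟨sdiff_nonempty.2 fun hAS => ?_, g u₀, fun v hv => ?_, hin⟩
  · obtain ⟨u, hu, w, hw, hne⟩ := hg
    exact hne <| (hin u (mem_inter.2 ⟨hu, hAS hu⟩)).trans
      (hin w (mem_inter.2 ⟨hw, hAS hw⟩)).symm
  · rw [mem_sdiff] at hv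
    simpa [hv.2, hu₀.2] using hconst v hv.1 u₀ hu₀.1

end Finset

theorem ProperExt.piecewise {V : Type*} [DecidableEq V] {k : ℕ} {H : Finset (Finset V)}
    {L : V → Finset (Fin k)} {χ : V → Option (Fin k)} {χ' χp : V → Fin k} {S : Finset V}
    (h : ProperExt H L χ χ') (hS : ∀ v ∈ S, χ v = none)
    (hχp : ∀ v, χ v = none → v ∉ S → χp v ∈ L v)
    (hgood : ∀ A ∈ H, ∃ u ∈ A, ∃ w ∈ A,
      S.piecewise χ' (fun v => (χ v).getD (χp v)) u ≠
        S.piecewise χ' (fun v => (χ v).getD (χp v)) w) :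
    ProperExt H L χ (S.piecewise χ' fun v => (χ v).getD (χp v)) := by
  refine ⟨fun v a hv => ?_, fun v hv => ?_, hgood⟩
  · have hvS : v ∉ S := fun hvS => by simp [hS v hvS] at hv
    simp [hvS, hv]
  · by_cases hvS : v ∈ S
    · simpa [hvS] using h.2.1 v hv
    · simpa [hvS, hv] using hχp v hv hvS

theorem stmt7_general {V : Type*} [DecidableEq V] (k : ℕ)
    (H : Finset (Finset V)) (L : V → Finset (Fin k))
    (χ : V → Option (Fin k)) (S : Finset V) (χp : V → Fin k)
    (hS : ∀ v ∈ S, χ v = none)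
    (hmeet : ∀ A ∈ H, (A ∩ S).Nonempty)
    (hχp : ∀ v, χ v = none → v ∉ S → χp v ∈ L v) :
    (∃ χ' : V → Fin k, ProperExt H L χ χ') ↔
      ((∃ χ' : V → Fin k, ProperExt H L χ χ' ∧
          ∀ v, χ v = none → v ∉ S → χ' v = χp v) ∨
       (∃ A ∈ H, ¬ (A ⊆ S ∧ ∀ v ∈ A, χ v = none) ∧
          ∃ a : Fin k, (A \ S).Nonempty ∧ (∀ v ∈ A \ S, (χ v).getD (χp v) = a) ∧
          ∃ χ' : V → Fin k, ProperExt H L χ χ' ∧ ∀ v ∈ A ∩ S, χ' v = a)) := by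
  refine ⟨fun ⟨χ', hχ'⟩ => ?_, ?_⟩
  · by_cases hgood : ∀ A ∈ H, ∃ u ∈ A, ∃ w ∈ A,
        S.piecewise χ' (fun v => (χ v).getD (χp v)) u ≠
          S.piecewise χ' (fun v => (χ v).getD (χp v)) w
    · exact .inl ⟨_, hχ'.piecewise hS hχp hgood, fun v hv hvS => by simp [hvS, hv]⟩
    · push Not at hgood
      obtain ⟨A, hA, hmono⟩ := hgood
      obtain ⟨hne, a, hout, hin⟩ :=
        Finset.exists_eq_of_piecewise_const hmono (hmeet A hA) (hχ'.2.2 A hA)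
      exact .inr ⟨A, hA, fun h => Finset.sdiff_nonempty.1 hne h.1, a, hne, hout, χ', hχ', hin⟩
  · rintro (⟨χ', h, -⟩ | ⟨A, -, -, a, -, -, χ', h, -⟩) <;> exact ⟨χ', h⟩

/-- Decomposition lemma: with S ⊆ V₀ meeting every edge and χ_p any list coloring of
V₀ \ S, χ extends to a proper L-coloring iff (i) some proper extension agrees with
χ_p on V₀ \ S, or (ii) some edge A (not an entirely-uncolored edge inside S) has
|χ̂(A \ S)| = 1 and some proper extension is constant on A ∩ S with that color. -/
theorem stmt7 {V : Type*} [Fintype V] [DecidableEq V] (k : ℕ)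
    (H : Finset (Finset V)) (L : V → Finset (Fin k))
    (χ : V → Option (Fin k)) (S : Finset V) (χp : V → Fin k)
    (hproper : ∀ A ∈ H, (∀ v ∈ A, χ v ≠ none) → ∃ u ∈ A, ∃ w ∈ A, χ u ≠ χ w)
    (hS : ∀ v ∈ S, χ v = none)
    (hmeet : ∀ A ∈ H, (A ∩ S).Nonempty)
    (hχp : ∀ v, χ v = none → v ∉ S → χp v ∈ L v) :
    (∃ χ' : V → Fin k, ProperExt H L χ χ') ↔
      ((∃ χ' : V → Fin k, ProperExt H L χ χ' ∧
          ∀ v, χ v = none → v ∉ S → χ' v = χp v) ∨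
       (∃ A ∈ H, ¬ (A ⊆ S ∧ ∀ v ∈ A, χ v = none) ∧
          ∃ a : Fin k, (A \ S).Nonempty ∧ (∀ v ∈ A \ S, (χ v).getD (χp v) = a) ∧
          ∃ χ' : V → Fin k, ProperExt H L χ χ' ∧ ∀ v ∈ A ∩ S, χ' v = a)) :=
  stmt7_general k H L χ S χp hS hmeet hχp
end

section
/- Let ρ ≥ 2, c ≥ 0, and for μ ≥ 1 let ξ(μ) be the unique positive root of (1/ε(μ))^{ξ(μ)} = 2μ where ε(μ) = 4(c+1)·ln(2ρ)/ξ(μ). Then ξ(μ) > 4(c+1)·ln(2ρ) > 1 and ε(μ) < 1 for all μ ≥ 1, and ξ(μ) = Θ(log μ / log log μ) as μ → ∞ for fixed ρ, c. -/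
/-!
Put `u = ξ / H`. Then `(ξ / H) ^ ξ = 2μ` reads `u * log u = log (2μ) / H`, and `u ↦ u * log u`
maps `(1, ∞)` strictly increasingly onto `(0, ∞)`, so the root is `ξ = H * mulLogInv (log (2μ) / H)`.
If `u * log u = t ≥ e`, then `u ≤ t` (as `u ≥ e`) and `t ≤ u²`, so `log t / 2 ≤ log u ≤ log t` and
`u = t / log u` lies between `t / log t` and `2 t / log t`. Finally `t / log t` with
`t = log (2μ) / H` is asymptotically equivalent to `H⁻¹ * log μ / log (log μ)`.
-/

open Real Filter Asymptotics Set

-- A junk value for `t ≤ 0`, where `u ↦ u * log u` takes no value `t` on `(1, ∞)`.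
noncomputable def mulLogInv (t : ℝ) : ℝ :=
  Function.invFunOn (fun u => u * log u) (Ioi 1) t

lemma exists_mem_Ioi_one_mul_log_eq {t : ℝ} (ht : 0 < t) : ∃ u ∈ Ioi (1 : ℝ), u * log u = t := by
  have hexp : 1 < exp t := one_lt_exp_iff.mpr ht
  have hmem : t ∈ Ioo ((fun u => u * log u) 1) ((fun u => u * log u) (exp t)) := by
    simp only [log_one, mul_zero, log_exp]
    exact ⟨ht, lt_mul_of_one_lt_left ht hexp⟩
  obtain ⟨u, hu, rfl⟩ :=
    intermediate_value_Ioo hexp.le continuous_mul_log.continuousOn hmem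
  exact ⟨u, hu.1, rfl⟩

lemma mulLogInv_mul_log {t : ℝ} (ht : 0 < t) : mulLogInv t * log (mulLogInv t) = t :=
  Function.invFunOn_eq (exists_mem_Ioi_one_mul_log_eq ht)

lemma one_lt_mulLogInv {t : ℝ} (ht : 0 < t) : 1 < mulLogInv t :=
  Function.invFunOn_mem (exists_mem_Ioi_one_mul_log_eq ht)

lemma eq_mulLogInv_of_mul_log_eq {u t : ℝ} (hu : 0 < u) (ht : 0 < t) (h : u * log u = t) :
    u = mulLogInv t := by
  have hu1 : 1 < u := by
    rw [← log_pos_iff hu.le]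
    exact pos_of_mul_pos_right (h ▸ ht) hu.le
  have hinj : InjOn (fun u => u * log u) (Ioi 1) :=
    mul_log_strictMonoOn.injOn.mono fun x hx =>
      le_of_lt (lt_trans (by norm_num) (mem_Ioi.mp hx))
  exact hinj hu1 (one_lt_mulLogInv ht) (h.trans (mulLogInv_mul_log ht).symm)

lemma div_log_le_of_mul_log_eq {u t : ℝ} (hu : 1 < u) (h : u * log u = t) (ht : exp 1 ≤ t) :
    t / log t ≤ u := by
  have hlogu : 1 ≤ log u := by
    by_contra! hlt
    have : u < exp 1 := by rwa [← log_lt_iff_lt_exp (by linarith)]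
    nlinarith [log_pos hu]
  have hut : u ≤ t := by nlinarith
  have hlogt : 0 < log t := by linarith [log_le_log (by linarith) hut]
  rw [div_le_iff₀ hlogt]
  calc t = u * log u := h.symm
    _ ≤ u * log t := by gcongr

lemma le_two_mul_div_log_of_mul_log_eq {u t : ℝ} (hu : 1 < u) (h : u * log u = t) (ht : 1 < t) :
    u ≤ 2 * (t / log t) := by
  have hsq : t ≤ u ^ 2 := by nlinarith [log_le_sub_one_of_pos (by linarith : 0 < u)]
  have hlog : log t ≤ 2 * log u := by
    simpa [log_pow] using log_le_log (by linarith) hsq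
  rw [← mul_div_assoc, le_div_iff₀ (log_pos ht)]
  nlinarith

lemma isTheta_mulLogInv_atTop : mulLogInv =Θ[atTop] fun t => t / log t := by
  have hbounds : ∀ᶠ t in atTop,
      t / log t ≤ mulLogInv t ∧ mulLogInv t ≤ 2 * (t / log t) ∧ 0 < t / log t := by
    filter_upwards [eventually_ge_atTop (exp 1)] with t ht
    have ht1 : 1 < t := lt_of_lt_of_le (one_lt_exp_iff.mpr one_pos) ht
    have ht0 : 0 < t := by linarith
    refine ⟨div_log_le_of_mul_log_eq (one_lt_mulLogInv ht0) (mulLogInv_mul_log ht0) ht,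
      le_two_mul_div_log_of_mul_log_eq (one_lt_mulLogInv ht0)
        (mulLogInv_mul_log ht0) ht1, div_pos ht0 (log_pos ht1)⟩
  refine ⟨IsBigO.of_bound 2 ?_, IsBigO.of_bound 1 ?_⟩ <;>
  filter_upwards [hbounds] with t ⟨hlow, hup, hpos⟩ <;>
  rw [norm_of_nonneg hpos.le, norm_of_nonneg (hpos.le.trans hlow)] <;>
  linarith

lemma isEquivalent_log_const_mul {a : ℝ} (ha : 0 < a) :
    (fun x => log (a * x)) ~[atTop] log := by
  refine (IsEquivalent.refl.const_add_of_norm_tendsto_atTop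
    (tendsto_norm_atTop_atTop.comp tendsto_log_atTop) (c := log a)).congr_left ?_
  filter_upwards [eventually_gt_atTop 0] with x hx
  rw [log_mul ha.ne' hx.ne']

lemma isTheta_log_const_mul_div_log_log {a H : ℝ} (ha : 0 < a) (hH : 0 < H) :
    (fun μ => log (a * μ) / H / log (log (a * μ) / H)) =Θ[atTop]
      fun μ => log μ / log (log μ) := by
  have hscaled : Tendsto (fun μ => H⁻¹ * log μ) atTop atTop :=
    tendsto_log_atTop.const_mul_atTop (inv_pos.mpr hH)
  have hnum : (fun μ => log (a * μ) / H) ~[atTop] fun μ => H⁻¹ * log μ := by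
    have := (IsEquivalent.refl (u := fun _ : ℝ => H⁻¹)).mul (isEquivalent_log_const_mul ha)
    simpa only [Pi.mul_def, div_eq_inv_mul] using this
  have hden : (fun μ => log (log (a * μ) / H)) ~[atTop] fun μ => log (log μ) :=
    (hnum.log hscaled).trans
      ((isEquivalent_log_const_mul (inv_pos.mpr hH)).comp_tendsto tendsto_log_atTop)
  refine (hnum.div hden).isTheta.trans ?_
  simpa only [Pi.div_def, mul_div_assoc] using
    (isTheta_const_mul_left (inv_ne_zero hH.ne')).mpr
      (isTheta_refl (fun μ => log μ / log (log μ)) atTop)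

lemma isTheta_mul_mulLogInv_log_const_mul {a H : ℝ} (ha : 0 < a) (hH : 0 < H) :
    (fun μ => H * mulLogInv (log (a * μ) / H)) =Θ[atTop] fun μ => log μ / log (log μ) := by
  have htend : Tendsto (fun μ => log (a * μ) / H) atTop atTop :=
    (tendsto_log_atTop.comp (tendsto_id.const_mul_atTop ha)).atTop_div_const hH
  have hcomp : (mulLogInv ∘ fun μ => log (a * μ) / H) =Θ[atTop]
      ((fun t => t / log t) ∘ fun μ => log (a * μ) / H) :=
    ⟨isTheta_mulLogInv_atTop.1.comp_tendsto htend, isTheta_mulLogInv_atTop.2.comp_tendsto htend⟩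
  exact ((isTheta_const_mul_left hH.ne').mpr hcomp).trans (isTheta_log_const_mul_div_log_log ha hH)

lemma div_rpow_self_eq_iff {H a y : ℝ} (hH : 0 < H) (ha : 1 < a) (hy : 0 < y) :
    (y / H) ^ y = a ↔ y = H * mulLogInv (log a / H) := by
  have hloga : 0 < log a / H := div_pos (log_pos ha) hH
  constructor
  · intro h
    have hmul : y / H * log (y / H) = log a / H := by
      rw [← h, log_rpow (div_pos hy hH)]
      ring
    rw [← eq_mulLogInv_of_mul_log_eq (div_pos hy hH) hloga hmul]
    field_simp
  · rintro rfl
    have hu := one_lt_mulLogInv hloga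
    rw [mul_div_cancel_left₀ _ hH.ne', rpow_def_of_pos (by linarith),
      show log (mulLogInv (log a / H)) * (H * mulLogInv (log a / H))
        = H * (mulLogInv (log a / H) * log (mulLogInv (log a / H))) by ring,
      mulLogInv_mul_log hloga, mul_div_cancel₀ _ hH.ne', exp_log (by linarith)]

/-- With H = 4(c+1)ln(2ρ) > 1, for each μ ≥ 1 there is a unique positive root ξ(μ)
of (ξ/H)^ξ = 2μ (equivalently (1/ε)^ξ = 2μ with ε = H/ξ); moreover ξ(μ) > H > 1,
ε(μ) < 1, and ξ(μ) = Θ(log μ / log log μ). -/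
theorem stmt12 (ρ : ℝ) (c : ℕ) (hρ : 2 ≤ ρ) :
    (1 : ℝ) < 4 * ((c : ℝ) + 1) * Real.log (2 * ρ) ∧
    ∃ ξ : ℝ → ℝ,
      (∀ μ : ℝ, 1 ≤ μ →
        4 * ((c : ℝ) + 1) * Real.log (2 * ρ) < ξ μ ∧
        (ξ μ / (4 * ((c : ℝ) + 1) * Real.log (2 * ρ))) ^ (ξ μ) = 2 * μ ∧
        (4 * ((c : ℝ) + 1) * Real.log (2 * ρ)) / ξ μ < 1 ∧
        ∀ y : ℝ, 0 < y →
          (y / (4 * ((c : ℝ) + 1) * Real.log (2 * ρ))) ^ y = 2 * μ → y = ξ μ) ∧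
      Asymptotics.IsTheta Filter.atTop ξ
        (fun μ : ℝ => Real.log μ / Real.log (Real.log μ)) := by
  set H : ℝ := 4 * ((c : ℝ) + 1) * log (2 * ρ)
  have hH : 1 < H := by
    have hlog : log 2 ≤ log (2 * ρ) := log_le_log two_pos (by linarith)
    have hc : (0 : ℝ) ≤ c := c.cast_nonneg
    nlinarith [log_two_gt_d9]
  have hH0 : 0 < H := by linarith
  refine ⟨hH, fun μ => H * mulLogInv (log (2 * μ) / H), fun μ hμ => ?_,
    isTheta_mul_mulLogInv_log_const_mul two_pos hH0⟩
  have h2μ : 1 < 2 * μ := by linarith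
  have hroot : H < H * mulLogInv (log (2 * μ) / H) :=
    lt_mul_of_one_lt_right hH0 (one_lt_mulLogInv (div_pos (log_pos h2μ) hH0))
  refine ⟨hroot, ?_, (div_lt_one (by linarith)).mpr hroot,
    fun y hy => (div_rpow_self_eq_iff hH0 h2μ hy).mp⟩
  exact (div_rpow_self_eq_iff hH0 h2μ (by linarith)).mpr rfl
end

section
/- Let H be a hypergraph and χ a proper partial L-coloring. Suppose v ∈ H_min, an edge of minimum size among the traces on V₀ of the classes H_i (i ∈ [k]), H₀ = ∅, for all nonempty classes |H_i| > 2c, at least two classes are nonempty, H is c-intersecting, and |H_min| ≤ log_ν m. Then there exists a vertex v ∈ V₀ and distinct indices i, j ∈ [k] with deg_{H_i}(v) > |H_i|/(2·log_ν m) and deg_{H_j}(v) ≥ 1. -/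
/-!
Fix an edge `A` of some class `H_j` whose uncoloured part `S = A ∩ V₀` has at most `log_ν m`
vertices, and another nonempty class `H_i`. An edge of `H_i` can only meet `A` inside `S`, and by
`c`-intersection at most `c` edges of `H_i` miss `A`; so `|H_i| - c ≤ ∑_{v ∈ S} deg_{H_i}(v)`.
As `|H_i| > 2c`, the left side exceeds `|H_i| / 2`, and a vertex `v ∈ S` of maximal degree has
`deg_{H_i}(v) ≥ |H_i| / (2|S|) ≥ |H_i| / (2 log_ν m)`; it lies in `A`, so `deg_{H_j}(v) ≥ 1`.
-/

open Finset

namespace Finset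

theorem exists_sum_le_card_mul {α : Type*} {s : Finset α} (hs : s.Nonempty) (f : α → ℕ) :
    ∃ a ∈ s, ∑ x ∈ s, f x ≤ #s * f a := by
  obtain ⟨a, ha, hmax⟩ := s.exists_max_image f hs
  exact ⟨a, ha, s.sum_le_card_nsmul f (f a) hmax⟩

theorem card_filter_inter_nonempty_le_sum {α : Type*} [DecidableEq α]
    (F : Finset (Finset α)) (s : Finset α) :
    #(F.filter fun B => (s ∩ B).Nonempty) ≤ ∑ a ∈ s, #(F.filter (a ∈ ·)) := by
  refine (card_le_card ?_).trans card_biUnion_le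
  intro B hB
  obtain ⟨hBF, a, ha⟩ := mem_filter.mp hB
  rw [mem_inter] at ha
  exact mem_biUnion.mpr ⟨a, ha.1, mem_filter.mpr ⟨hBF, ha.2⟩⟩

end Finset

namespace PartialColoring

variable {V ι : Type*} [DecidableEq ι] (H : Finset (Finset V)) (χ : V → Option ι)

/-- The class `H_i`, where `χ v = none` encodes `v ∈ V₀`. -/
def colorClass (i : ι) : Finset (Finset V) :=
  H.filter fun A => A.image χ = {none, some i}

def classDegree [DecidableEq V] (i : ι) (v : V) : ℕ :=
  #(H.filter fun A => A.image χ = {none, some i} ∧ v ∈ A)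

variable {H χ}

theorem classDegree_eq_card_filter_mem [DecidableEq V] (i : ι) (v : V) :
    classDegree H χ i v = #((colorClass H χ i).filter (v ∈ ·)) := by
  rw [colorClass, filter_filter, classDegree]

theorem eq_none_of_mem_colorClass_of_mem_colorClass {i j : ι} (hij : i ≠ j) {A B : Finset V}
    (hA : A ∈ colorClass H χ j) (hB : B ∈ colorClass H χ i) {v : V} (hvA : v ∈ A)
    (hvB : v ∈ B) : χ v = none := by
  have hvj : χ v ∈ ({none, some j} : Finset (Option ι)) :=
    (mem_filter.mp hA).2 ▸ mem_image_of_mem χ hvA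
  have hvi : χ v ∈ ({none, some i} : Finset (Option ι)) :=
    (mem_filter.mp hB).2 ▸ mem_image_of_mem χ hvB
  simp only [mem_insert, mem_singleton] at hvi hvj
  rcases hvi with h | h
  · exact h
  · rcases hvj with h' | h'
    · exact h'
    · exact absurd (Option.some_injective _ (h.symm.trans h')) hij

theorem ne_of_mem_colorClass {i j : ι} (hij : i ≠ j) {A B : Finset V}
    (hA : A ∈ colorClass H χ j) (hB : B ∈ colorClass H χ i) : B ≠ A := by
  rintro rfl
  have : some i ∈ ({none, some j} : Finset (Option ι)) := by
    rw [← (mem_filter.mp hA).2, (mem_filter.mp hB).2]; simp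
  simp only [mem_insert, mem_singleton, reduceCtorEq, Option.some.injEq, false_or] at this
  exact hij this

/-- Every edge of `H_i` meets the trace of `A ∈ H_j` or is disjoint from `A`; the `c`-intersecting
property bounds the latter kind by `c`. -/
theorem card_colorClass_le_add_sum_classDegree [DecidableEq V] {c : ℕ}
    (hint : ∀ A ∈ H, #(H.filter fun B => B ≠ A ∧ A ∩ B = ∅) ≤ c)
    {i j : ι} (hij : i ≠ j) {A : Finset V} (hA : A ∈ colorClass H χ j) :
    #(colorClass H χ i) ≤ c + ∑ v ∈ A.filter (χ · = none), classDegree H χ i v := by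
  set S := A.filter (χ · = none)
  have hmiss : #((colorClass H χ i).filter fun B => ¬ (S ∩ B).Nonempty) ≤ c := by
    refine (card_le_card fun B hB => ?_).trans (hint A (mem_filter.mp hA).1)
    obtain ⟨hBi, hBS⟩ := mem_filter.mp hB
    refine mem_filter.mpr ⟨(mem_filter.mp hBi).1, ne_of_mem_colorClass hij hA hBi, ?_⟩
    refine eq_empty_iff_forall_notMem.mpr fun v hv => hBS ⟨v, ?_⟩
    obtain ⟨hvA, hvB⟩ := mem_inter.mp hv
    exact mem_inter.mpr
      ⟨mem_filter.mpr ⟨hvA, eq_none_of_mem_colorClass_of_mem_colorClass hij hA hBi hvA hvB⟩, hvB⟩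
  have hmeet := card_filter_inter_nonempty_le_sum (colorClass H χ i) S
  simp only [← classDegree_eq_card_filter_mem] at hmeet
  rw [← (colorClass H χ i).card_filter_add_card_filter_not fun B => (S ∩ B).Nonempty]
  omega

end PartialColoring

open PartialColoring

theorem stmt17_general {V : Type*} [DecidableEq V] (k c : ℕ)
    (H : Finset (Finset V)) (χ : V → Option (Fin k)) (ν : ℝ)
    (hint : ∀ A ∈ H, (H.filter fun B => B ≠ A ∧ A ∩ B = ∅).card ≤ c)
    (hbig : ∀ i : Fin k, (H.filter fun A => A.image χ = {none, some i}).Nonempty →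
      2 * c < (H.filter fun A => A.image χ = {none, some i}).card)
    (htwo : ∃ i j : Fin k, i ≠ j ∧
      (H.filter fun A => A.image χ = {none, some i}).Nonempty ∧
      (H.filter fun A => A.image χ = {none, some j}).Nonempty)
    (hmin : ∃ i : Fin k, ∃ A ∈ H, A.image χ = {none, some i} ∧
      (((A.filter fun v => χ v = none).card : ℝ) ≤ Real.logb ν (H.card : ℝ))) :
    ∃ v : V, χ v = none ∧ ∃ i j : Fin k, i ≠ j ∧
      ((H.filter fun A => A.image χ = {none, some i}).card : ℝ) /
          (2 * Real.logb ν (H.card : ℝ)) <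
        ((H.filter fun A => A.image χ = {none, some i} ∧ v ∈ A).card : ℝ) ∧
      1 ≤ (H.filter fun A => A.image χ = {none, some j} ∧ v ∈ A).card := by
  obtain ⟨j, A, hAH, hAj, hSlog⟩ := hmin
  have hA : A ∈ colorClass H χ j := mem_filter.mpr ⟨hAH, hAj⟩
  obtain ⟨i, hij, hi⟩ : ∃ i, i ≠ j ∧ (colorClass H χ i).Nonempty := by
    obtain ⟨i₁, i₂, h12, h₁, h₂⟩ := htwo
    by_cases h : i₁ = j
    · exact ⟨i₂, h ▸ h12.symm, h₂⟩
    · exact ⟨i₁, h, h₁⟩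
  set S := A.filter (χ · = none)
  have hS : S.Nonempty := by
    obtain ⟨v, hvA, hv⟩ := mem_image.mp (hAj ▸ mem_insert_self none {some j})
    exact ⟨v, mem_filter.mpr ⟨hvA, hv⟩⟩
  obtain ⟨v, hvS, hvmax⟩ := exists_sum_le_card_mul hS (classDegree H χ i)
  have hcount : #(colorClass H χ i) ≤ c + ∑ u ∈ S, classDegree H χ i u :=
    card_colorClass_le_add_sum_classDegree hint hij hA
  have hbig_i : 2 * c < #(colorClass H χ i) := hbig i hi
  obtain ⟨hvA, hv⟩ := mem_filter.mp hvS
  refine ⟨v, hv, i, j, hij, ?_, card_pos.mpr ⟨A, mem_filter.mpr ⟨hAH, hAj, hvA⟩⟩⟩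
  have hS1 : (1 : ℝ) ≤ #S := by exact_mod_cast hS.card_pos
  have hlt : (#(colorClass H χ i) : ℝ) < 2 * (#S * classDegree H χ i v) := by
    exact_mod_cast (by omega : #(colorClass H χ i) < 2 * (#S * classDegree H χ i v))
  rw [div_lt_iff₀ (by linarith)]
  calc (#(colorClass H χ i) : ℝ) < 2 * (#S * classDegree H χ i v) := hlt
    _ ≤ 2 * (Real.logb ν H.card * classDegree H χ i v) := by gcongr
    _ = classDegree H χ i v * (2 * Real.logb ν H.card) := by ring

/-- Existence of a vertex of high degree in some class H_i and positive degree in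
another class H_j, given H₀ = ∅, all nonempty classes of size > 2c, at least two
nonempty classes, and a trace edge of size at most log_ν m. -/
theorem stmt17 {V : Type*} [Fintype V] [DecidableEq V] (k c : ℕ)
    (H : Finset (Finset V)) (χ : V → Option (Fin k)) (ν : ℝ)
    (hint : ∀ A ∈ H, (H.filter fun B => B ≠ A ∧ A ∩ B = ∅).card ≤ c)
    (hproper : ∀ A ∈ H, (∀ v ∈ A, χ v ≠ none) → ∃ u ∈ A, ∃ w ∈ A, χ u ≠ χ w)
    (hH0 : ∀ A ∈ H, A.image χ ≠ {none})
    (hbig : ∀ i : Fin k, (H.filter fun A => A.image χ = {none, some i}).Nonempty →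
      2 * c < (H.filter fun A => A.image χ = {none, some i}).card)
    (htwo : ∃ i j : Fin k, i ≠ j ∧
      (H.filter fun A => A.image χ = {none, some i}).Nonempty ∧
      (H.filter fun A => A.image χ = {none, some j}).Nonempty)
    (hmin : ∃ i : Fin k, ∃ A ∈ H, A.image χ = {none, some i} ∧
      (((A.filter fun v => χ v = none).card : ℝ) ≤ Real.logb ν (H.card : ℝ))) :
    ∃ v : V, χ v = none ∧ ∃ i j : Fin k, i ≠ j ∧
      ((H.filter fun A => A.image χ = {none, some i}).card : ℝ) /
          (2 * Real.logb ν (H.card : ℝ)) <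
        ((H.filter fun A => A.image χ = {none, some i} ∧ v ∈ A).card : ℝ) ∧
      1 ≤ (H.filter fun A => A.image χ = {none, some j} ∧ v ∈ A).card :=
  stmt17_general k c H χ ν hint hbig htwo hmin
end
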